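/- For the Veronese cone σ^∨ = cone((1,0),(1,n)) ⊆ ℝ² with S = σ^∨ ∩ ℤ² and m generated by the lattice points (1,0),(1,1),...,(1,n), the volume of σ^∨ \ (s·Hull m ∪ (Exp m + σ^∨)) equals n·s²/2 for 0 < s ≤ 1, equals −(n²/2)(s−1)² + n(s−1) + n/2 for 1 ≤ s ≤ 1 + 1/n, and equals (n+1)/2 for s ≥ 1 + 1/n. -/

import Mathlib

/-! The cone `σ^∨` is the wedge `0 ≤ y ≤ n x`. Its nonzero lattice points all have `x ≥ 1`, and
their convex hull is the truncated wedge `x ≥ 1` (it contains the segment from `(1,0)` to `(1,n)`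
and is stable under scaling by integers `≥ 1`), so `s • Hull m` is the part of the wedge with
`x ≥ s`. Every lattice point of `Exp m` lies in some translate `(1,k) + σ^∨`, `0 ≤ k ≤ n`, so
`Exp m + σ^∨` is the union of these translates. What is left of the wedge to the left of `x = s`
is the triangle over `[0, min s 1)` and, over `1 ≤ x < min s (1 + 1/n)`, the `n` congruent pieces
`k + n (x - 1) < y < k + 1`; integrating their heights gives the three formulas. -/

open Set Pointwise MeasureTheory

def wedge (c : ℝ) : Set (ℝ × ℝ) := {p | 0 ≤ p.2 ∧ p.2 ≤ c * p.1}

section Wedge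

variable {c : ℝ}

theorem setOf_nonneg_comb_eq_wedge (hc : 0 < c) :
    {x : ℝ × ℝ | ∃ a b : ℝ, 0 ≤ a ∧ 0 ≤ b ∧ x = a • ((1 : ℝ), (0 : ℝ)) + b • ((1 : ℝ), c)} =
      wedge c := by
  ext ⟨x, y⟩
  simp only [wedge, mem_ofPred_eq, Prod.smul_mk, smul_eq_mul, Prod.mk_add_mk, Prod.mk.injEq]
  constructor
  · rintro ⟨a, b, ha, hb, rfl, rfl⟩
    constructor <;> nlinarith
  · rintro ⟨hy, hyx⟩
    refine ⟨x - y / c, y / c, ?_, by positivity, by ring, by field_simp; ring⟩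
    rw [sub_nonneg, div_le_iff₀ hc]
    linarith

theorem add_mem_wedge {p q : ℝ × ℝ} (hp : p ∈ wedge c) (hq : q ∈ wedge c) :
    p + q ∈ wedge c :=
  ⟨add_nonneg hp.1 hq.1, by simpa [mul_add] using add_le_add hp.2 hq.2⟩

theorem smul_mem_wedge {t : ℝ} {p : ℝ × ℝ} (ht : 0 ≤ t) (hp : p ∈ wedge c) :
    t • p ∈ wedge c :=
  ⟨mul_nonneg ht hp.1, by simpa [mul_left_comm] using mul_le_mul_of_nonneg_left hp.2 ht⟩

theorem convex_wedge : Convex ℝ (wedge c) := fun _ hp _ hq _ _ ha hb _ =>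
  add_mem_wedge (smul_mem_wedge ha hp) (smul_mem_wedge hb hq)

theorem smul_setOf_one_le_fst_inter_wedge {s : ℝ} (hs : 0 < s) :
    s • ({p : ℝ × ℝ | 1 ≤ p.1} ∩ wedge c) = {p | s ≤ p.1} ∩ wedge c := by
  ext ⟨x, y⟩
  rw [mem_smul_set_iff_inv_smul_mem₀ hs.ne']
  simp only [wedge, mem_inter_iff, mem_ofPred_eq, Prod.smul_mk, smul_eq_mul]
  simp only [inv_mul_eq_div, ← mul_div_assoc, one_le_div hs, div_le_div_iff_of_pos_right hs,
    div_nonneg_iff, hs.le, and_true, hs.not_ge, and_false, or_false]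

end Wedge

def wedgeLatticePoints (n : ℕ) : Set (ℝ × ℝ) :=
  {v | v ∈ wedge n ∧ (∃ z₁ z₂ : ℤ, v = ((z₁ : ℝ), (z₂ : ℝ))) ∧ v ≠ 0}

section LatticePoints

variable {n : ℕ}

theorem mem_wedgeLatticePoints_iff (hn : 1 ≤ n) {v : ℝ × ℝ} :
    v ∈ wedgeLatticePoints n ↔
      ∃ a b : ℤ, 1 ≤ a ∧ 0 ≤ b ∧ b ≤ n * a ∧ v = ((a : ℝ), (b : ℝ)) := by
  constructor
  · rintro ⟨⟨hb, hba⟩, ⟨a, b, rfl⟩, hv⟩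
    replace hb : (0 : ℝ) ≤ b := hb
    replace hba : (b : ℝ) ≤ n * a := hba
    norm_cast at hb hba
    refine ⟨a, b, ?_, hb, hba, rfl⟩
    by_contra! ha
    have hn : (1 : ℤ) ≤ n := by exact_mod_cast hn
    obtain rfl : b = 0 := by nlinarith
    obtain rfl : a = 0 := by nlinarith
    exact hv (by simp)
  · rintro ⟨a, b, ha, hb, hba, rfl⟩
    refine ⟨⟨(by exact_mod_cast hb : (0 : ℝ) ≤ b), (by exact_mod_cast hba : (b : ℝ) ≤ n * a)⟩,
      ⟨a, b, rfl⟩, fun h => ?_⟩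
    have : (a : ℝ) = 0 := congrArg Prod.fst h
    norm_cast at this
    omega

theorem one_natCast_mem_wedgeLatticePoints (hn : 1 ≤ n) {k : ℕ} (hk : k ≤ n) :
    ((1 : ℝ), (k : ℝ)) ∈ wedgeLatticePoints n :=
  (mem_wedgeLatticePoints_iff hn).2 ⟨1, k, le_rfl, by positivity, by omega, by simp⟩

theorem natCast_smul_wedgeLatticePoints_subset (hn : 1 ≤ n) {m : ℕ} (hm : 1 ≤ m) :
    (m : ℝ) • wedgeLatticePoints n ⊆ wedgeLatticePoints n := by
  rintro _ ⟨v, hv, rfl⟩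
  obtain ⟨a, b, ha, hb, hba, rfl⟩ := (mem_wedgeLatticePoints_iff hn).1 hv
  have hm : (1 : ℤ) ≤ m := by exact_mod_cast hm
  refine (mem_wedgeLatticePoints_iff hn).2 ⟨m * a, m * b, by nlinarith, by positivity, ?_, by simp⟩
  nlinarith

theorem wedgeLatticePoints_subset (hn : 1 ≤ n) :
    wedgeLatticePoints n ⊆ {p | 1 ≤ p.1} ∩ wedge n := by
  intro v hv
  obtain ⟨a, b, ha, -, -, rfl⟩ := (mem_wedgeLatticePoints_iff hn).1 hv
  exact ⟨(by exact_mod_cast ha : (1 : ℝ) ≤ a), hv.1⟩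

theorem smul_mem_convexHull_wedgeLatticePoints (hn : 1 ≤ n) {x : ℝ} (hx : 1 ≤ x) {q : ℝ × ℝ}
    (hq : q ∈ convexHull ℝ (wedgeLatticePoints n)) :
    x • q ∈ convexHull ℝ (wedgeLatticePoints n) := by
  set m := ⌊x⌋₊ + 1
  have hm : (⌊x⌋₊ : ℝ) ≥ 1 := by exact_mod_cast Nat.le_floor (by exact_mod_cast hx)
  have hmq : (m : ℝ) • q ∈ convexHull ℝ (wedgeLatticePoints n) := by
    have := smul_mem_smul_set (a := (m : ℝ)) hq
    rw [← convexHull_smul] at this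
    exact convexHull_mono (natCast_smul_wedgeLatticePoints_subset hn (by omega)) this
  have ht : (x - 1) / ⌊x⌋₊ ∈ Icc (0 : ℝ) 1 :=
    ⟨div_nonneg (by linarith) (by positivity),
      div_le_one_of_le₀ (by linarith [Nat.lt_floor_add_one x]) (by positivity)⟩
  convert (convex_convexHull ℝ _).add_smul_sub_mem hq hmq ht using 1
  match_scalars
  simp only [m, Nat.cast_add, Nat.cast_one]
  field_simp
  ring

theorem convexHull_wedgeLatticePoints (hn : 1 ≤ n) :
    convexHull ℝ (wedgeLatticePoints n) = {p | 1 ≤ p.1} ∩ wedge n := by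
  refine (convexHull_min (wedgeLatticePoints_subset hn)
    ((convex_halfSpace_ge (f := Prod.fst) (LinearMap.fst ℝ ℝ ℝ).isLinear 1).inter
      convex_wedge)).antisymm ?_
  rintro ⟨x, y⟩ ⟨hx, hy, hyx⟩
  have hx : (1 : ℝ) ≤ x := hx
  have hxpos : 0 < x := by linarith
  have hvert : ((1 : ℝ), y / x) ∈ convexHull ℝ (wedgeLatticePoints n) := by
    have hseg := segment_subset_convexHull (𝕜 := ℝ)
      (one_natCast_mem_wedgeLatticePoints hn (Nat.zero_le n))
      (one_natCast_mem_wedgeLatticePoints hn (le_refl n))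
    refine hseg ⟨1 - y / (n * x), y / (n * x), ?_, by positivity, by ring, ?_⟩
    · rw [sub_nonneg, div_le_one (by positivity)]
      exact hyx
    · simp only [Prod.smul_mk, Prod.mk_add_mk, smul_eq_mul, Nat.cast_zero]
      congr 1 <;> field_simp <;> ring
  convert smul_mem_convexHull_wedgeLatticePoints hn hx hvert using 1
  simp only [Prod.smul_mk, smul_eq_mul, mul_one, Prod.mk.injEq, true_and]
  field_simp

theorem wedgeLatticePoints_add_wedge (hn : 1 ≤ n) :
    wedgeLatticePoints n + wedge n =
      {p | ∃ k : ℕ, k ≤ n ∧ p - ((1 : ℝ), (k : ℝ)) ∈ wedge n} := by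
  ext p
  constructor
  · rintro ⟨_, hv, w, hw, rfl⟩
    obtain ⟨a, b, ha, hb, hba, rfl⟩ := (mem_wedgeLatticePoints_iff hn).1 hv
    obtain ⟨k, hkn, hkb, hbk⟩ : ∃ k : ℕ, k ≤ n ∧ (k : ℤ) ≤ b ∧ b - k ≤ n * (a - 1) := by
      rcases le_total b n with hbn | hnb
      · exact ⟨b.toNat, by omega, by omega, by nlinarith [Int.toNat_of_nonneg hb]⟩
      · exact ⟨n, le_rfl, hnb, by nlinarith⟩
    refine ⟨k, hkn, ?_⟩
    rw [add_sub_right_comm]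
    refine add_mem_wedge ⟨?_, ?_⟩ hw
    · simpa using (Int.cast_le (R := ℝ)).2 hkb
    · simpa using (Int.cast_le (R := ℝ)).2 hbk
  · rintro ⟨k, hkn, hk⟩
    exact ⟨_, one_natCast_mem_wedgeLatticePoints hn hkn, _, hk, add_sub_cancel _ _⟩

end LatticePoints

section RegionBetween

variable {α : Type*} [MeasurableSpace α] {μ : Measure α} {f g : α → ℝ} {s : Set α}

theorem prod_setOf_mem_Icc_eq_prod_regionBetween (hf : Measurable f) (hg : Measurable g)
    (hs : MeasurableSet s) :
    μ.prod volume {p : α × ℝ | p.1 ∈ s ∧ p.2 ∈ Icc (f p.1) (g p.1)} =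
      μ.prod volume (regionBetween f g s) := by
  rw [Measure.prod_apply (measurableSet_region_between_cc hf hg hs),
    Measure.prod_apply (measurableSet_regionBetween hf hg hs)]
  refine lintegral_congr fun x => ?_
  by_cases hx : x ∈ s
  · have hIcc : Prod.mk x ⁻¹' {p : α × ℝ | p.1 ∈ s ∧ p.2 ∈ Icc (f p.1) (g p.1)} =
        Icc (f x) (g x) := by ext; simp [hx]
    have hIoo : Prod.mk x ⁻¹' regionBetween f g s = Ioo (f x) (g x) := by
      ext; simp [regionBetween, hx]
    rw [hIcc, hIoo, Real.volume_Icc, Real.volume_Ioo]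
  · simp [regionBetween, preimage, hx]

end RegionBetween

theorem volume_regionBetween_Ico {f g : ℝ → ℝ} (hf : Continuous f) (hg : Continuous g) {a b : ℝ}
    (hab : a ≤ b) (hfg : ∀ x ∈ Ico a b, f x ≤ g x) :
    volume (regionBetween f g (Ico a b)) = ENNReal.ofReal (∫ x in a..b, g x - f x) := by
  rw [Measure.volume_eq_prod,
    volume_regionBetween_eq_integral (hf.integrableOn_Icc.mono_set Ico_subset_Icc_self)
      (hg.integrableOn_Icc.mono_set Ico_subset_Icc_self) measurableSet_Ico hfg,
    integral_Ico_eq_integral_Ioc, ← intervalIntegral.integral_of_le hab]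
  rfl

theorem forall_sub_notMem_wedge_iff {n : ℕ} {p : ℝ × ℝ} (hp : p ∈ wedge n) :
    (∀ k : ℕ, k ≤ n → p - ((1 : ℝ), (k : ℝ)) ∉ wedge n) ↔
      ∃ k : ℕ, k < n ∧ p.2 ∈ Ioo (k + n * (p.1 - 1)) (k + 1) := by
  simp only [wedge, mem_ofPred_eq, Prod.fst_sub, Prod.snd_sub, sub_nonneg, not_and, not_le,
    mem_Ioo]
  constructor
  · intro h
    have hfloor : (⌊p.2⌋₊ : ℝ) ≤ p.2 := Nat.floor_le hp.1
    have hlt : ⌊p.2⌋₊ < n := by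
      by_contra! hle
      have := h n le_rfl ((Nat.cast_le.2 hle).trans hfloor)
      linarith [hp.2]
    exact ⟨⌊p.2⌋₊, hlt, by linarith [h _ hlt.le hfloor], Nat.lt_floor_add_one _⟩
  · rintro ⟨k, -, hky, hyk⟩ j - hjy
    have hjk : (j : ℝ) ≤ k := by
      exact_mod_cast Nat.lt_add_one_iff.1 (by exact_mod_cast hjy.trans_lt hyk)
    linarith

theorem wedge_diff_eq {n : ℕ} (hn : 1 ≤ n) (s : ℝ) :
    wedge n \
        ({p | s ≤ p.1} ∩ wedge n ∪ {p | ∃ k : ℕ, k ≤ n ∧ p - ((1 : ℝ), (k : ℝ)) ∈ wedge n}) =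
      {p | p.1 ∈ Ico 0 (min s 1) ∧ p.2 ∈ Icc 0 ((n : ℝ) * p.1)} ∪
        ⋃ k ∈ Finset.range n,
          regionBetween (fun x : ℝ => (k : ℝ) + n * (x - 1)) (fun _ => (k : ℝ) + 1)
            (Ico 1 (max 1 (min s (1 + 1 / n)))) := by
  have hn' : (1 : ℝ) ≤ n := by exact_mod_cast hn
  ext p
  simp only [mem_sdiff, mem_union, mem_inter_iff, mem_ofPred_eq, not_or, not_and, not_exists,
    mem_iUnion, Finset.mem_range, regionBetween, mem_Ico, lt_max_iff, lt_min_iff, exists_prop]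
  constructor
  · rintro ⟨hp, hps, hpk⟩
    have hxs : p.1 < s := lt_of_not_ge fun h => hps h hp
    rcases lt_or_ge p.1 1 with hx | hx
    · exact Or.inl ⟨⟨by nlinarith [hp.1, hp.2], hxs, hx⟩, hp⟩
    · obtain ⟨k, hk, hky, hyk⟩ := (forall_sub_notMem_wedge_iff hp).1 hpk
      refine Or.inr ⟨k, hk, ⟨hx, Or.inr ⟨hxs, ?_⟩⟩, hky, hyk⟩
      rw [← sub_lt_iff_lt_add', lt_div_iff₀ (by positivity)]
      linarith
  · rintro (⟨⟨hx0, hxs, hx1⟩, hp⟩ | ⟨k, hk, ⟨hx1, hxM⟩, hky, hyk⟩)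
    · refine ⟨hp, fun h => absurd h (not_le.2 hxs), fun k _ ⟨hk0, hk⟩ => ?_⟩
      simp only [Prod.fst_sub, Prod.snd_sub] at hk0 hk
      nlinarith
    · have hk' : (k : ℝ) + 1 ≤ n := by exact_mod_cast hk
      have hp : p ∈ wedge n := ⟨by nlinarith, by nlinarith⟩
      have hxs : p.1 < s := by rcases hxM with h | h <;> [linarith; exact h.1]
      exact ⟨hp, fun h => absurd h (not_le.2 hxs),
        (forall_sub_notMem_wedge_iff hp).2 ⟨k, hk, hky, hyk⟩⟩

theorem volume_triangle {c m : ℝ} (hc : 0 ≤ c) (hm : 0 ≤ m) :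
    volume {p : ℝ × ℝ | p.1 ∈ Ico 0 m ∧ p.2 ∈ Icc 0 (c * p.1)} =
      ENNReal.ofReal (c * m ^ 2 / 2) := by
  rw [Measure.volume_eq_prod, prod_setOf_mem_Icc_eq_prod_regionBetween (f := fun _ => 0)
    (g := fun x => c * x) measurable_const (measurable_const_mul c) measurableSet_Ico,
    ← Measure.volume_eq_prod, volume_regionBetween_Ico continuous_const (continuous_const_mul c) hm
    fun x hx => mul_nonneg hc hx.1]
  congr 1
  simp only [sub_zero]
  rw [intervalIntegral.integral_const_mul, integral_id]
  ring

theorem volume_staircase_step (a : ℝ) {c M : ℝ} (hc : 0 ≤ c) (hM : 1 ≤ M)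
    (hcM : c * (M - 1) ≤ 1) :
    volume (regionBetween (fun x => a + c * (x - 1)) (fun _ => a + 1) (Ico 1 M)) =
      ENNReal.ofReal ((M - 1) - c * (M - 1) ^ 2 / 2) := by
  rw [volume_regionBetween_Ico (by fun_prop) continuous_const hM fun x hx => by
    nlinarith [hx.1, hx.2]]
  congr 1
  simp only [add_sub_add_left_eq_sub, intervalIntegral.integral_comp_sub_right (fun x => 1 - c * x),
    intervalIntegral.integral_sub intervalIntegrable_const
      ((continuous_const_mul c).intervalIntegrable _ _),
    intervalIntegral.integral_const, smul_eq_mul]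
  rw [intervalIntegral.integral_const_mul, integral_id]
  ring

theorem volume_wedge_diff {n : ℕ} (hn : 1 ≤ n) {s : ℝ} (hs : 0 < s) :
    volume (wedge n \
        ({p | s ≤ p.1} ∩ wedge n ∪ {p | ∃ k : ℕ, k ≤ n ∧ p - ((1 : ℝ), (k : ℝ)) ∈ wedge n})) =
      ENNReal.ofReal (n * min s 1 ^ 2 / 2 + n * ((max 1 (min s (1 + 1 / n)) - 1) -
        n * (max 1 (min s (1 + 1 / n)) - 1) ^ 2 / 2)) := by
  rw [wedge_diff_eq hn]
  set M := max 1 (min s (1 + 1 / n))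
  have hn0 : (0 : ℝ) < n := by exact_mod_cast hn
  have hM1 : 1 ≤ M := le_max_left _ _
  have hnM : n * (M - 1) ≤ 1 := by
    have : M ≤ 1 + 1 / n := max_le (by simp) (min_le_right _ _)
    rw [← le_div_iff₀' hn0]
    linarith
  have hstep : 0 ≤ (M - 1) - n * (M - 1) ^ 2 / 2 := by nlinarith
  rw [measure_union _ (Finset.measurableSet_biUnion _ fun k _ =>
      measurableSet_regionBetween (by fun_prop) measurable_const measurableSet_Ico),
    measure_biUnion_finset _ fun k _ =>
      measurableSet_regionBetween (by fun_prop) measurable_const measurableSet_Ico,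
    volume_triangle hn0.le (le_min hs.le zero_le_one)]
  · simp only [volume_staircase_step _ hn0.le hM1 hnM, Finset.sum_const, Finset.card_range,
      nsmul_eq_mul]
    rw [← ENNReal.ofReal_natCast, ← ENNReal.ofReal_mul (Nat.cast_nonneg n),
      ← ENNReal.ofReal_add (by positivity) (mul_nonneg (Nat.cast_nonneg n) hstep)]
  · intro j _ k _ hjk
    refine Set.disjoint_left.2 fun p ⟨hx, hpj⟩ ⟨_, hpk⟩ => ?_
    simp only [mem_Ioo] at hpj hpk
    have : 0 ≤ n * (p.1 - 1) := mul_nonneg hn0.le (sub_nonneg.2 hx.1)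
    rcases Nat.lt_or_gt_of_ne hjk with h | h
    · have : (j : ℝ) + 1 ≤ k := by exact_mod_cast h
      linarith [hpj.2, hpk.1]
    · have : (k : ℝ) + 1 ≤ j := by exact_mod_cast h
      linarith [hpj.1, hpk.2]
  · refine Set.disjoint_left.2 fun p hp hpG => ?_
    simp only [mem_iUnion, regionBetween, mem_Ico] at hpG
    obtain ⟨k, -, ⟨h1, -⟩, -⟩ := hpG
    exact absurd (hp.1.2.trans_le (min_le_right _ _)) (not_lt.2 h1)

theorem veronese_volume (n : ℕ) (hn : 1 ≤ n)
    (σ Expm Hullm : Set (ℝ × ℝ))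
    (hσ : σ = {x | ∃ a b : ℝ, 0 ≤ a ∧ 0 ≤ b ∧
      x = a • ((1 : ℝ), (0 : ℝ)) + b • ((1 : ℝ), (n : ℝ))})
    (hExp : Expm = {v | v ∈ σ ∧ (∃ z₁ z₂ : ℤ, v = ((z₁ : ℝ), (z₂ : ℝ))) ∧ v ≠ 0})
    (hHull : Hullm = convexHull ℝ Expm) :
    ∀ s : ℝ, 0 < s →
      ((s ≤ 1 →
        volume (σ \ (s • Hullm ∪ (Expm + σ))) =
          ENNReal.ofReal ((n : ℝ) * s ^ 2 / 2)) ∧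
      (1 ≤ s → s ≤ 1 + 1 / (n : ℝ) →
        volume (σ \ (s • Hullm ∪ (Expm + σ))) =
          ENNReal.ofReal
            (-((n : ℝ) ^ 2 / 2) * (s - 1) ^ 2 + (n : ℝ) * (s - 1) + (n : ℝ) / 2)) ∧
      (1 + 1 / (n : ℝ) ≤ s →
        volume (σ \ (s • Hullm ∪ (Expm + σ))) =
          ENNReal.ofReal (((n : ℝ) + 1) / 2))) := by
  intro s hs
  have hn0 : (0 : ℝ) < n := by exact_mod_cast hn
  obtain rfl : σ = wedge n := hσ.trans (setOf_nonneg_comb_eq_wedge hn0)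
  obtain rfl : Expm = wedgeLatticePoints n := hExp
  subst hHull
  rw [convexHull_wedgeLatticePoints hn, smul_setOf_one_le_fst_inter_wedge hs,
    wedgeLatticePoints_add_wedge hn, volume_wedge_diff hn hs]
  have h1n : (0 : ℝ) ≤ 1 / n := by positivity
  refine ⟨fun hs1 => ?_, fun hs1 hs2 => ?_, fun hs2 => ?_⟩
  · rw [min_eq_left hs1, min_eq_left (by linarith), max_eq_left hs1]
    congr 1
    ring
  · rw [min_eq_right hs1, min_eq_left hs2, max_eq_right hs1]
    congr 1
    ring
  · rw [min_eq_right (by linarith), min_eq_right hs2, max_eq_right (by linarith)]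
    congr 1
    field_simp
    ring
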